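/- Let f : Γ_+ → ℝ be smooth, symmetric, positive, and inverse concave. Then for every κ ∈ Γ_+ and all indices k ≠ l with κ_k ≠ κ_l one has ((∂f/∂κ_k)(κ) − (∂f/∂κ_l)(κ))/(κ_k − κ_l) + (∂f/∂κ_k)(κ)/κ_l + (∂f/∂κ_l)(κ)/κ_k ≥ 0. -/

import Mathlib

/-!
Put `τ = κ⁻¹` and let `τ'` be `τ` with the entries `k` and `l` swapped. By symmetry of `f` the
concave function `f_*` takes the same value at `τ` and `τ'`, so `τ` minimises `f_*` on the segment
`[τ, τ']` and the derivative of `f_*` at `τ` in the direction `τ' - τ` is nonnegative. Since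
`∂f_*/∂τ_i = κ_i² (∂f/∂κ_i) / f²`, this derivative is `(τ_l - τ_k)(κ_k² f_k - κ_l² f_l) / f²`, and
the expression of the theorem equals `(τ_l - τ_k)(κ_k² f_k - κ_l² f_l) / (κ_k - κ_l)²`.
-/

open Finset

/-- The positive cone `Γ₊ = {κ ∈ ℝⁿ : κᵢ > 0 for all i}`. -/
def PosCone (n : ℕ) : Set (Fin n → ℝ) := {κ | ∀ i, 0 < κ i}

/-- The first partial derivative `∂f/∂κ_k` at `x`. -/
noncomputable def pd1 {n : ℕ} (f : (Fin n → ℝ) → ℝ) (k : Fin n) (x : Fin n → ℝ) : ℝ :=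
  fderiv ℝ f x (Pi.single k 1)

/-- The second partial derivative `∂²f/∂κ_k∂κ_l` at `x`. -/
noncomputable def pd2 {n : ℕ} (f : (Fin n → ℝ) → ℝ) (k l : Fin n) (x : Fin n → ℝ) : ℝ :=
  fderiv ℝ (fun y => fderiv ℝ f y (Pi.single k 1)) x (Pi.single l 1)

/-- The dual function `f_*(τ) = f(τ₁⁻¹, …, τₙ⁻¹)⁻¹`. -/
noncomputable def dualF {n : ℕ} (f : (Fin n → ℝ) → ℝ) (τ : Fin n → ℝ) : ℝ :=
  (f (fun i => (τ i)⁻¹))⁻¹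

theorem isOpen_posCone (n : ℕ) : IsOpen (PosCone n) := by
  have : PosCone n = Set.univ.pi fun _ => Set.Ioi 0 := by ext; simp [PosCone]
  rw [this]
  exact isOpen_set_pi Set.finite_univ fun _ _ => isOpen_Ioi

theorem inv_mem_posCone {n : ℕ} {κ : Fin n → ℝ} (hκ : κ ∈ PosCone n) :
    (fun i => (κ i)⁻¹) ∈ PosCone n :=
  fun i => inv_pos.2 (hκ i)

theorem dualF_comp_perm {n : ℕ} {f : (Fin n → ℝ) → ℝ}
    (hsym : ∀ σ : Equiv.Perm (Fin n), ∀ κ ∈ PosCone n, f (κ ∘ σ) = f κ)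
    {τ : Fin n → ℝ} (hτ : τ ∈ PosCone n) (σ : Equiv.Perm (Fin n)) :
    dualF f (τ ∘ σ) = dualF f τ :=
  congrArg Inv.inv (hsym σ _ (inv_mem_posCone hτ))

theorem ConcaveOn.hasFDerivAt_sub_nonneg {E : Type*} [NormedAddCommGroup E] [NormedSpace ℝ E]
    {s : Set E} {g : E → ℝ} {g' : E →L[ℝ] ℝ} {x y : E} (hg : ConcaveOn ℝ s g)
    (hx : x ∈ s) (hy : y ∈ s) (hxy : g x ≤ g y) (hd : HasFDerivAt g g' x) :
    0 ≤ g' (y - x) := by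
  have hmin : IsMinOn g (segment ℝ x y) x := fun z hz =>
    (le_min le_rfl hxy).trans (hg.min_le_of_mem_segment hx hy hz)
  refine hmin.localize.hasFDerivWithinAt_nonneg hd.hasFDerivWithinAt
    (mem_posTangentConeAt_of_segment_subset ?_)
  rw [add_sub_cancel]

theorem comp_swap_sub_eq_smul {ι R : Type*} [DecidableEq ι] [Ring R] (τ : ι → R) (k l : ι) :
    τ ∘ Equiv.swap k l - τ = (τ l - τ k) • (Pi.single k 1 - Pi.single l 1) := by
  funext i
  simp only [Pi.sub_apply, Function.comp_apply, Pi.smul_apply, Equiv.swap_apply_def,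
    Pi.single_apply, smul_eq_mul]
  split_ifs <;> simp_all

open ContinuousLinearMap in
theorem hasFDerivAt_dualF {n : ℕ} {f : (Fin n → ℝ) → ℝ} {f' : (Fin n → ℝ) →L[ℝ] ℝ}
    {κ : Fin n → ℝ} (hκ : ∀ i, κ i ≠ 0) (hf : HasFDerivAt f f' κ) (hf0 : f κ ≠ 0) :
    HasFDerivAt (dualF f)
      (-(f κ ^ 2)⁻¹ • f'.comp (pi fun i => -κ i ^ 2 • (proj i : (Fin n → ℝ) →L[ℝ] ℝ)))
      (fun i => (κ i)⁻¹) := by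
  have hinv : HasFDerivAt (fun τ : Fin n → ℝ => fun i => (τ i)⁻¹)
      (pi fun i => -κ i ^ 2 • (proj i : (Fin n → ℝ) →L[ℝ] ℝ))
      (fun i => (κ i)⁻¹) := by
    refine hasFDerivAt_pi.2 fun i => ?_
    have hi : HasFDerivAt (fun x : ℝ => x⁻¹) _ (κ i)⁻¹ := hasFDerivAt_inv (inv_ne_zero (hκ i))
    refine (hi.comp (fun i => (κ i)⁻¹)
      (hasFDerivAt_apply (𝕜 := ℝ) (F' := fun _ : Fin n => ℝ) i _)).congr_fderiv ?_
    ext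
    simp [mul_comm]
  have hf' : HasFDerivAt f f' fun i => ((κ i)⁻¹)⁻¹ := by simpa using hf
  have hcomp := hf'.comp (fun i => (κ i)⁻¹) hinv
  have hf0' : (f fun i => ((κ i)⁻¹)⁻¹) ≠ 0 := by simpa using hf0
  refine ((hasFDerivAt_inv hf0').comp (fun i => (κ i)⁻¹) hcomp).congr_fderiv ?_
  ext
  simp [mul_comm]

open ContinuousLinearMap in
theorem pd1_dualF {n : ℕ} {f : (Fin n → ℝ) → ℝ} {κ : Fin n → ℝ} (hκ : ∀ i, κ i ≠ 0)
    (hf : DifferentiableAt ℝ f κ) (hf0 : f κ ≠ 0) (k : Fin n) :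
    pd1 (dualF f) k (fun i => (κ i)⁻¹) = κ k ^ 2 * pd1 f k κ / f κ ^ 2 := by
  rw [pd1, (hasFDerivAt_dualF hκ hf.hasFDerivAt hf0).fderiv]
  have hdiag : (pi fun i => -κ i ^ 2 • proj i : (Fin n → ℝ) →L[ℝ] Fin n → ℝ) (Pi.single k 1) =
      -κ k ^ 2 • (Pi.single k 1 : Fin n → ℝ) := by
    ext i
    by_cases h : i = k <;> simp [h]
  simp only [smul_apply, comp_apply, hdiag, map_smul, smul_eq_mul]
  rw [pd1]
  ring

theorem sub_div_sub_add_div_add_div_nonneg {a b p q : ℝ} (ha : a ≠ 0) (hb : b ≠ 0) (hab : a ≠ b)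
    (h : 0 ≤ (b⁻¹ - a⁻¹) * (a ^ 2 * p - b ^ 2 * q)) :
    0 ≤ (p - q) / (a - b) + p / b + q / a := by
  have hab' : a - b ≠ 0 := sub_ne_zero.2 hab
  have key : (p - q) / (a - b) + p / b + q / a
      = (b⁻¹ - a⁻¹) * (a ^ 2 * p - b ^ 2 * q) / (a - b) ^ 2 := by
    field_simp
    ring
  rw [key]
  positivity

/-- If `f` is smooth, symmetric, positive and inverse concave on `Γ₊`, then for `k ≠ l`
with `κ_k ≠ κ_l`, `(∂f/∂κ_k − ∂f/∂κ_l)/(κ_k − κ_l) + (∂f/∂κ_k)/κ_l + (∂f/∂κ_l)/κ_k ≥ 0`. -/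
theorem inverse_concave_offdiag (n : ℕ) (f : (Fin n → ℝ) → ℝ)
    (hsmooth : ContDiffOn ℝ (⊤ : ℕ∞) f (PosCone n))
    (hsym : ∀ σ : Equiv.Perm (Fin n), ∀ κ ∈ PosCone n, f (κ ∘ σ) = f κ)
    (hpos : ∀ κ ∈ PosCone n, 0 < f κ)
    (hinvconc : ConcaveOn ℝ (PosCone n) (dualF f)) :
    ∀ κ ∈ PosCone n, ∀ k l : Fin n, k ≠ l → κ k ≠ κ l →
      0 ≤ (pd1 f k κ - pd1 f l κ) / (κ k - κ l) + pd1 f k κ / κ l + pd1 f l κ / κ k := by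
  intro κ hκ k l _ hne
  set τ : Fin n → ℝ := fun i => (κ i)⁻¹
  have hτ : τ ∈ PosCone n := inv_mem_posCone hκ
  have hκ0 : ∀ i, κ i ≠ 0 := fun i => (hκ i).ne'
  have hfκ : f κ ≠ 0 := (hpos κ hκ).ne'
  have hdiff : DifferentiableAt ℝ f κ :=
    (hsmooth.differentiableOn (by simp)).differentiableAt ((isOpen_posCone n).mem_nhds hκ)
  have hslope : 0 ≤ fderiv ℝ (dualF f) τ (τ ∘ Equiv.swap k l - τ) :=
    hinvconc.hasFDerivAt_sub_nonneg hτ (fun i => hτ _) (dualF_comp_perm hsym hτ _).ge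
      (hasFDerivAt_dualF hκ0 hdiff.hasFDerivAt hfκ).differentiableAt.hasFDerivAt
  rw [comp_swap_sub_eq_smul, map_smul, map_sub] at hslope
  change 0 ≤ (τ l - τ k) • (pd1 (dualF f) k τ - pd1 (dualF f) l τ) at hslope
  rw [pd1_dualF hκ0 hdiff hfκ, pd1_dualF hκ0 hdiff hfκ, smul_eq_mul, ← sub_div, ← mul_div_assoc,
    le_div_iff₀ (by positivity), zero_mul] at hslope
  exact sub_div_sub_add_div_add_div_nonneg (hκ0 k) (hκ0 l) hne hslope
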